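/- arXiv:2108.05430 — 4 statements merged into one kernel-verified Lean document; each statement's English description precedes it below -/
import Mathlib

section
/- For a triangle with circumradius R, inradius r, and distance d between circumcenter and incenter, the identity 1/(R−d) + 1/(R+d) = 1/r holds. -/
open Metric EuclideanGeometry
open scoped RealInnerProductSpace

set_option maxHeartbeats 1000000

noncomputable section

/-- The Euclidean plane. -/
abbrev E2 := EuclideanSpace ℝ (Fin 2)

/-- Point with Cartesian coordinates. -/
def pt (x y : ℝ) : E2 := (WithLp.equiv 2 (Fin 2 → ℝ)).symm ![x, y]

/-- Incenter of a triangle via barycentric coordinates (side lengths). -/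
def incenter2 (A B C : E2) : E2 :=
  (dist B C + dist A C + dist A B)⁻¹ • (dist B C • A + dist A C • B + dist A B • C)

/-- The line through two points, as a set. -/
def lineThrough (P Q : E2) : Set E2 := (affineSpan ℝ {P, Q} : Set E2)

/-- The line `PQ` is tangent to the circle of center `O'` and radius `r`. -/
def IsTangentLine (P Q O' : E2) (r : ℝ) : Prop :=
  Metric.infDist O' (lineThrough P Q) = r

lemma gram2 (u v w : E2) :
    ⟪u, u⟫ * ⟪v, v⟫ * ⟪w, w⟫ + 2 * ⟪u, v⟫ * ⟪u, w⟫ * ⟪v, w⟫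
      = ⟪u, u⟫ * ⟪v, w⟫^2 + ⟪v, v⟫ * ⟪u, w⟫^2 + ⟪w, w⟫ * ⟪u, v⟫^2 := by
  simp only [PiLp.inner_apply, RCLike.inner_apply, conj_trivial, Fin.sum_univ_two]
  ring

lemma pyth (z y : E2) (c : ℝ) (h : ⟪z, y⟫ = 0) :
    ‖z + c • y‖^2 = ‖z‖^2 + c^2 * ‖y‖^2 := by
  have hzy : ⟪y, z⟫ = 0 := by rw [real_inner_comm]; exact h
  simp only [← real_inner_self_eq_norm_sq, inner_add_add_self, real_inner_smul_left,
    real_inner_smul_right, h, hzy]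
  ring

lemma norm_sub_sq' (p q : E2) : ‖p - q‖^2 = ⟪p, p⟫ - 2*⟪p, q⟫ + ⟪q, q⟫ := by
  rw [← real_inner_self_eq_norm_sq]
  simp only [inner_sub_left, inner_sub_right, real_inner_comm q p]
  ring

lemma inner_comb3 (x y z : E2) (p q t : ℝ) :
    ⟪p • x + q • y + t • z, p • x + q • y + t • z⟫
      = p^2*⟪x, x⟫ + q^2*⟪y, y⟫ + t^2*⟪z, z⟫
        + 2*p*q*⟪x, y⟫ + 2*p*t*⟪x, z⟫ + 2*q*t*⟪y, z⟫ := by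
  simp only [inner_add_left, inner_add_right, real_inner_smul_left, real_inner_smul_right,
    real_inner_comm y x, real_inner_comm z x, real_inner_comm z y]
  ring

lemma inner_comb2 (x y : E2) (p q : ℝ) :
    ⟪p • x + q • y, p • x + q • y⟫ = p^2*⟪x, x⟫ + 2*p*q*⟪x, y⟫ + q^2*⟪y, y⟫ := by
  simp only [inner_add_left, inner_add_right, real_inner_smul_left, real_inner_smul_right,
    real_inner_comm y x]
  ring

lemma inner_smul_self' (x : E2) (t : ℝ) : ⟪t • x, t • x⟫ = t^2 * ⟪x, x⟫ := by
  simp only [real_inner_smul_left, real_inner_smul_right]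
  ring

lemma div_identity (P Q Y : ℝ) (h : Y ≠ 0) :
    (Q - 2*(P/Y)*P + (P/Y)^2*Y)*Y = Q*Y - P^2 := by
  field_simp
  ring

lemma proj_sq (J y : E2) (h : ⟪y, y⟫ ≠ 0) :
    ‖J - (⟪J, y⟫ / ⟪y, y⟫) • y‖^2 * ⟪y, y⟫ = ⟪J, J⟫ * ⟪y, y⟫ - ⟪J, y⟫^2 := by
  have e : ⟪J - (⟪J, y⟫/⟪y, y⟫) • y, J - (⟪J, y⟫/⟪y, y⟫) • y⟫
      = ⟪J, J⟫ - 2*(⟪J, y⟫/⟪y, y⟫)*⟪J, y⟫ + (⟪J, y⟫/⟪y, y⟫)^2*⟪y, y⟫ := by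
    simp only [inner_sub_left, inner_sub_right, real_inner_smul_left, real_inner_smul_right,
      real_inner_comm y J]
    ring
  rw [← real_inner_self_eq_norm_sq, e]
  exact div_identity _ _ _ h

lemma infDist_line (P B C : E2) (h : ⟪C - B, C - B⟫ ≠ 0) :
    Metric.infDist P (lineThrough B C)
      = ‖P - B - (⟪P - B, C - B⟫ / ⟪C - B, C - B⟫) • (C - B)‖ := by
  set y := C - B with hy
  set t0 : ℝ := ⟪P - B, y⟫ / ⟪y, y⟫ with ht0
  have hF : t0 • y + B ∈ lineThrough B C := by
    have := smul_vsub_vadd_mem_affineSpan_pair (k := ℝ) t0 B C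
    simpa [vsub_eq_sub, vadd_eq_add, hy, lineThrough] using this
  have hperp : ⟪P - B - t0 • y, y⟫ = 0 := by
    rw [inner_sub_left, real_inner_smul_left, ht0, div_mul_cancel₀ _ h, sub_self]
  apply le_antisymm
  · calc Metric.infDist P (lineThrough B C) ≤ dist P (t0 • y + B) :=
          Metric.infDist_le_dist_of_mem hF
      _ = ‖P - B - t0 • y‖ := by rw [dist_eq_norm]; congr 1; abel
  · have hne : Nonempty (lineThrough B C) := ⟨_, hF⟩
    rw [Metric.infDist_eq_iInf]
    refine le_ciInf fun z => ?_
    obtain ⟨x, hx⟩ := z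
    have hx' : (x - B) +ᵥ B ∈ line[ℝ, B, C] := by
      simpa [vadd_eq_add, lineThrough] using hx
    obtain ⟨t, ht⟩ := vadd_left_mem_affineSpan_pair.1 hx'
    have hxe : x = t • y + B := by
      rw [vsub_eq_sub] at ht; rw [hy, ht]; abel
    have hdecomp : P - x = (P - B - t0 • y) + (t0 - t) • y := by
      rw [hxe, sub_smul]; abel
    have hsq : ‖P - x‖^2 = ‖P - B - t0 • y‖^2 + (t0-t)^2 * ‖y‖^2 := by
      rw [hdecomp, pyth _ _ _ hperp]
    have h1 : ‖P - B - t0 • y‖^2 ≤ ‖P - x‖^2 := by nlinarith [sq_nonneg ((t0-t) * ‖y‖)]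
    have := norm_nonneg (P - x)
    have := norm_nonneg (P - B - t0 • y)
    rw [dist_eq_norm]
    nlinarith

/-- `1/(R−d) + 1/(R+d) = 1/r` for a triangle. -/
theorem stmt_1 (A B C O : E2) (R r d : ℝ)
    (hABC : AffineIndependent ℝ ![A, B, C])
    (hOA : dist O A = R) (hOB : dist O B = R) (hOC : dist O C = R)
    (hr : Metric.infDist (incenter2 A B C) (lineThrough B C) = r)
    (hd : d = dist O (incenter2 A B C))
    (hRd : R > d) :
    1 / (R - d) + 1 / (R + d) = 1 / r := by
  have hinj := hABC.injective
  have hAB : A ≠ B := by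
    intro h
    have : (0 : Fin 3) = 1 := hinj (by simpa using h)
    simp at this
  have hAC : A ≠ C := by
    intro h
    have : (0 : Fin 3) = 2 := hinj (by simpa using h)
    simp at this
  have hBC : B ≠ C := by
    intro h
    have : (1 : Fin 3) = 2 := hinj (by simpa using h)
    simp at this
  set a := dist B C with ha_def
  set b := dist A C with hb_def
  set c := dist A B with hc_def
  have ha : 0 < a := dist_pos.2 hBC
  have hb : 0 < b := dist_pos.2 hAC
  have hc : 0 < c := dist_pos.2 hAB
  have hsne : a + b + c ≠ 0 := by positivity
  set I := incenter2 A B C with hI_def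
  have hR0 : 0 ≤ R := hOA ▸ dist_nonneg
  have hR : 0 < R := by
    rcases hR0.lt_or_eq with h | h
    · exact h
    · exfalso
      apply hAB
      have h1 : O = A := dist_eq_zero.1 (by rw [hOA, ← h])
      have h2 : O = B := dist_eq_zero.1 (by rw [hOB, ← h])
      rw [← h1, h2]
  have hd0 : 0 ≤ d := hd ▸ dist_nonneg
  -- inner product facts at circumcenter
  have huu : ⟪A - O, A - O⟫ = R^2 := by
    rw [real_inner_self_eq_norm_sq, ← dist_eq_norm, dist_comm, hOA]
  have hvv : ⟪B - O, B - O⟫ = R^2 := by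
    rw [real_inner_self_eq_norm_sq, ← dist_eq_norm, dist_comm, hOB]
  have hww : ⟪C - O, C - O⟫ = R^2 := by
    rw [real_inner_self_eq_norm_sq, ← dist_eq_norm, dist_comm, hOC]
  have hα : 2*⟪A - O, B - O⟫ = 2*R^2 - c^2 := by
    have e : A - B = (A - O) - (B - O) := by abel
    have h1 : c^2 = ‖(A - O) - (B - O)‖^2 := by rw [← e, ← dist_eq_norm, hc_def]
    rw [norm_sub_sq', huu, hvv] at h1
    linarith
  have hβ : 2*⟪A - O, C - O⟫ = 2*R^2 - b^2 := by
    have e : A - C = (A - O) - (C - O) := by abel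
    have h1 : b^2 = ‖(A - O) - (C - O)‖^2 := by rw [← e, ← dist_eq_norm, hb_def]
    rw [norm_sub_sq', huu, hww] at h1
    linarith
  have hγ : 2*⟪B - O, C - O⟫ = 2*R^2 - a^2 := by
    have e : B - C = (B - O) - (C - O) := by abel
    have h1 : a^2 = ‖(B - O) - (C - O)‖^2 := by rw [← e, ← dist_eq_norm, ha_def]
    rw [norm_sub_sq', hvv, hww] at h1
    linarith
  -- the distance d
  have hsmul : (a+b+c) • (I - O) = a • (A - O) + b • (B - O) + c • (C - O) := by
    rw [hI_def]
    simp only [incenter2, ← ha_def, ← hb_def, ← hc_def]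
    match_scalars <;> field_simp <;> ring
  have hsd : (a+b+c) * d = ‖a • (A - O) + b • (B - O) + c • (C - O)‖ := by
    rw [← hsmul, norm_smul, Real.norm_of_nonneg (by positivity), hd, dist_comm, dist_eq_norm]
  have hds : d^2 * (a+b+c)^2 = R^2*(a+b+c)^2 - a*b*c*(a+b+c) := by
    have h1 : ((a+b+c) * d)^2
        = ⟪a • (A-O) + b • (B-O) + c • (C-O), a • (A-O) + b • (B-O) + c • (C-O)⟫ := by
      rw [hsd]; exact (real_inner_self_eq_norm_sq _).symm
    rw [inner_comb3] at h1
    linear_combination h1 + a^2*huu + b^2*hvv + c^2*hww + a*b*hα + a*c*hβ + b*c*hγ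
  -- the inradius r
  have hyy : ⟪C - B, C - B⟫ = a^2 := by
    rw [real_inner_self_eq_norm_sq, ← dist_eq_norm, dist_comm, ha_def]
  have hxx : ⟪A - B, A - B⟫ = c^2 := by
    rw [real_inner_self_eq_norm_sq, ← dist_eq_norm, hc_def]
  have hyne : ⟪C - B, C - B⟫ ≠ 0 := by rw [hyy]; positivity
  set m := ⟪A - B, C - B⟫ with hm_def
  have hm : 2*m = c^2 + a^2 - b^2 := by
    have e : A - C = (A - B) - (C - B) := by abel
    have h1 : b^2 = ‖(A - B) - (C - B)‖^2 := by rw [← e, ← dist_eq_norm, hb_def]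
    rw [norm_sub_sq', hxx, hyy, ← hm_def] at h1
    linarith
  have hr' : r = ‖I - B - (⟪I - B, C - B⟫ / ⟪C - B, C - B⟫) • (C - B)‖ :=
    hr.symm.trans (infDist_line I B C hyne)
  have hsJ : (a+b+c) • (I - B) = a • (A - B) + c • (C - B) := by
    rw [hI_def]
    simp only [incenter2, ← ha_def, ← hb_def, ← hc_def]
    match_scalars <;> field_simp <;> ring
  have hJy : (a+b+c) * ⟪I - B, C - B⟫ = a*m + c*a^2 := by
    have h1 := congrArg (fun z : E2 => ⟪z, C - B⟫) hsJ
    simp only [inner_add_left, real_inner_smul_left] at h1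
    rw [hyy, ← hm_def] at h1
    exact h1
  have hJJ : (a+b+c)^2 * ⟪I - B, I - B⟫ = a^2*c^2 + 2*a*c*m + c^2*a^2 := by
    have h1 : ⟪(a+b+c) • (I - B), (a+b+c) • (I - B)⟫
        = ⟪a • (A - B) + c • (C - B), a • (A - B) + c • (C - B)⟫ := by rw [hsJ]
    rw [inner_smul_self', inner_comb2, hyy, hxx, ← hm_def] at h1
    linear_combination h1
  have hr2 : r^2 * a^2 = ⟪I - B, I - B⟫ * a^2 - ⟪I - B, C - B⟫^2 := by
    have h1 := proj_sq (I - B) (C - B) hyne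
    rw [← hr', hyy] at h1
    linear_combination h1
  have hr2s : r^2*(a+b+c)^2 = a^2*c^2 - m^2 := by
    have key : r^2*(a+b+c)^2*a^2 = (a^2*c^2 - m^2)*a^2 := by
      linear_combination (a+b+c)^2 * hr2 + a^2 * hJJ
        - ((a+b+c)*⟪I - B, C - B⟫ + a*m + c*a^2) * hJy
    have ha2 : a^2 ≠ 0 := by positivity
    exact mul_right_cancel₀ ha2 key
  -- Gram determinant / law of sines
  have hα' : ⟪A - O, B - O⟫ = R^2 - c^2/2 := by linarith
  have hβ' : ⟪A - O, C - O⟫ = R^2 - b^2/2 := by linarith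
  have hγ' : ⟪B - O, C - O⟫ = R^2 - a^2/2 := by linarith
  have hg := gram2 (A - O) (B - O) (C - O)
  rw [huu, hvv, hww, hα', hβ', hγ'] at hg
  have hm' : m = (c^2 + a^2 - b^2)/2 := by linarith
  have hbig : 4*R^2*(a^2*c^2 - m^2) = a^2*b^2*c^2 := by
    linear_combination 4*hg - 4*R^2*(m + (c^2 + a^2 - b^2)/2)*hm'
  -- combine
  have hrpos0 : 0 ≤ r := hr ▸ Metric.infDist_nonneg
  have hq : (2*R*r*(a+b+c))^2 = (a*b*c)^2 := by
    linear_combination 4*R^2*hr2s + hbig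
  have h2Rr : 2*R*r*(a+b+c) = a*b*c := by
    have h0 : (2*R*r*(a+b+c) - a*b*c)*(2*R*r*(a+b+c) + a*b*c) = 0 := by linear_combination hq
    rcases mul_eq_zero.1 h0 with h | h
    · linarith
    · exfalso
      have h1 : 0 ≤ 2*R*r*(a+b+c) := by
        have := mul_nonneg (mul_nonneg (by linarith : (0:ℝ) ≤ 2*R) hrpos0)
          (by positivity : (0:ℝ) ≤ a+b+c)
        linarith
      have h2 : 0 < a*b*c := by positivity
      linarith
  have hEuler : R^2 - d^2 = 2*R*r := by
    have h0 : (R^2 - d^2 - 2*R*r)*(a+b+c)^2 = 0 := by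
      linear_combination (-1)*hds - (a+b+c)*h2Rr
    have hs2 : ((a+b+c)^2 : ℝ) ≠ 0 := by positivity
    have := mul_eq_zero.1 h0
    rcases this with h | h
    · linarith
    · exact absurd h hs2
  have hprod : 0 < 2*R*r := by
    have h1 : 0 < (R - d)*(R + d) := mul_pos (by linarith) (by linarith)
    have h2 : (R - d)*(R + d) = R^2 - d^2 := by ring
    linarith
  have hrpos : 0 < r := by
    rcases lt_or_ge 0 r with h | h
    · exact h
    · exfalso
      have : 2*R*r ≤ 0 := mul_nonpos_of_nonneg_of_nonpos (by linarith) h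
      linarith
  have h1 : R - d ≠ 0 := by intro h; linarith
  have h2 : R + d ≠ 0 := by intro h; linarith
  have hrne : r ≠ 0 := ne_of_gt hrpos
  field_simp
  linear_combination (-1)*hEuler
end
end

section
/- In the bic-II family (triangle inscribed in circle(O, R) with the two sides from vertex P₁ tangent to circle((d,0), r)), if the Chapple relation d² = R(R − 2r) holds, then the incenter of the triangle is the fixed point (2dRr/(R² − d²), 0), independent of P₁. -/
open Metric EuclideanGeometry

noncomputable section

set_option maxHeartbeats 1600000

lemma dist_pt_sq (a b u v : ℝ) : dist (pt a b) (pt u v) ^ 2 = (a-u)^2+(b-v)^2 := by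
  rw [EuclideanSpace.dist_eq, Real.sq_sqrt]
  · simp [Fin.sum_univ_two, Real.dist_eq, sq_abs, pt]
  · positivity

lemma chord (R r d x1 y1 x2 y2 : ℝ) (hr : 0 < r) (hd : 0 ≤ d) (hin : d + r < R)
    (h1 : x1^2+y1^2 = R^2) (h2 : x2^2+y2^2 = R^2)
    (hne : ¬(x1 = x2 ∧ y1 = y2))
    (ht : IsTangentLine (pt x1 y1) (pt x2 y2) (pt d 0) r) :
    ∃ lam : ℝ, 0 < lam ∧ lam < 1 ∧
      (x1 + lam*(x2-x1) - d)^2 + (y1 + lam*(y2-y1))^2 = r^2 ∧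
      (d-x1)*(x2-x1) + (0-y1)*(y2-y1) = lam * ((x2-x1)^2+(y2-y1)^2) := by
  have hc2 : 0 < (x2-x1)^2 + (y2-y1)^2 := by
    by_contra hcon
    push_neg at hcon
    have hvx0 : x2 - x1 = 0 := by nlinarith [sq_nonneg (x2-x1), sq_nonneg (y2-y1)]
    have hvy0 : y2 - y1 = 0 := by nlinarith [sq_nonneg (x2-x1), sq_nonneg (y2-y1)]
    exact hne ⟨by linarith, by linarith⟩
  obtain ⟨lam, hlam⟩ : ∃ l : ℝ,
      l = ((d-x1)*(x2-x1) + (0-y1)*(y2-y1)) / ((x2-x1)^2+(y2-y1)^2) := ⟨_, rfl⟩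
  have hdot : (d-x1)*(x2-x1) + (0-y1)*(y2-y1) = lam * ((x2-x1)^2+(y2-y1)^2) := by
    rw [hlam]; field_simp
  have hFmem : pt (x1 + lam*(x2-x1)) (y1 + lam*(y2-y1)) ∈ lineThrough (pt x1 y1) (pt x2 y2) := by
    have heq : pt (x1 + lam*(x2-x1)) (y1 + lam*(y2-y1))
        = lam • (pt x2 y2 -ᵥ pt x1 y1) +ᵥ pt x1 y1 := by
      ext i; fin_cases i <;> simp [pt] <;> ring
    rw [heq]
    exact smul_vsub_vadd_mem_affineSpan_pair lam _ _
  have hmin : ∀ Y ∈ lineThrough (pt x1 y1) (pt x2 y2),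
      dist (pt d 0) (pt (x1 + lam*(x2-x1)) (y1 + lam*(y2-y1))) ≤ dist (pt d 0) Y := by
    intro Y hY
    have hY' : (Y -ᵥ pt x1 y1) +ᵥ pt x1 y1 ∈ line[ℝ, pt x1 y1, pt x2 y2] := by
      rwa [vsub_vadd]
    obtain ⟨m, hm⟩ := vadd_left_mem_affineSpan_pair.mp hY'
    have hYeq : Y = pt (x1 + m*(x2-x1)) (y1 + m*(y2-y1)) := by
      have h' : Y = m • (pt x2 y2 - pt x1 y1) + pt x1 y1 := by
        conv_lhs => rw [← vsub_vadd Y (pt x1 y1), ← hm]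
        simp [vadd_eq_add, vsub_eq_sub]
      rw [h']; ext i; fin_cases i <;> simp [pt] <;> ring
    have hd1 := dist_pt_sq d 0 (x1+lam*(x2-x1)) (y1+lam*(y2-y1))
    have hd2 : dist (pt d 0) Y ^2 = (d - (x1+m*(x2-x1)))^2 + (0 - (y1+m*(y2-y1)))^2 := by
      rw [hYeq]; exact dist_pt_sq _ _ _ _
    have key : (d - (x1+m*(x2-x1)))^2 + (0 - (y1+m*(y2-y1)))^2
        = (d - (x1+lam*(x2-x1)))^2 + (0 - (y1+lam*(y2-y1)))^2
          + (m-lam)^2*((x2-x1)^2+(y2-y1)^2) := by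
      linear_combination (2*lam - 2*m) * hdot
    have hsq : dist (pt d 0) (pt (x1 + lam*(x2-x1)) (y1 + lam*(y2-y1))) ^2
        ≤ dist (pt d 0) Y ^2 := by
      rw [hd1, hd2, key]
      nlinarith [sq_nonneg (m-lam), hc2]
    exact le_of_pow_le_pow_left₀ two_ne_zero dist_nonneg hsq
  have hFr : dist (pt d 0) (pt (x1 + lam*(x2-x1)) (y1 + lam*(y2-y1))) = r := by
    have hle : Metric.infDist (pt d 0) (lineThrough (pt x1 y1) (pt x2 y2)) ≤ dist (pt d 0) (pt (x1 + lam*(x2-x1)) (y1 + lam*(y2-y1))) := Metric.infDist_le_dist_of_mem hFmem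
    have hge : dist (pt d 0) (pt (x1 + lam*(x2-x1)) (y1 + lam*(y2-y1)))
        ≤ Metric.infDist (pt d 0) (lineThrough (pt x1 y1) (pt x2 y2)) := by
      by_contra hcon
      push_neg at hcon
      obtain ⟨y, hy, hylt⟩ := (Metric.infDist_lt_iff ⟨_, hFmem⟩).mp hcon
      exact absurd hylt (not_lt.mpr (hmin y hy))
    rw [IsTangentLine] at ht
    linarith [le_antisymm hle hge]
  have hfoot : (x1 + lam*(x2-x1) - d)^2 + (y1 + lam*(y2-y1))^2 = r^2 := by
    have h' := dist_pt_sq d 0 (x1+lam*(x2-x1)) (y1+lam*(y2-y1))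
    rw [hFr] at h'
    linear_combination -h'
  have hF0 : x1 + lam*(x2-x1) - d ≤ r := by nlinarith [sq_nonneg (y1 + lam*(y2-y1))]
  have hS : (x1+lam*(x2-x1))^2 + (y1+lam*(y2-y1))^2 < R^2 := by
    have h2d : d * (x1 + lam*(x2-x1) - d - r) ≤ 0 :=
      mul_nonpos_of_nonneg_of_nonpos hd (by linarith)
    nlinarith [h2d]
  have hSR : (x1+lam*(x2-x1))^2 + (y1+lam*(y2-y1))^2
      = R^2 + (lam^2 - lam)*((x2-x1)^2+(y2-y1)^2) := by
    linear_combination h1 + lam*h2 - lam*h1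
  have hll : lam*(lam-1)*((x2-x1)^2+(y2-y1)^2) < 0 := by nlinarith [hS, hSR]
  have hl0 : 0 < lam := by
    by_contra hcon
    push_neg at hcon
    have : 0 ≤ lam*(lam-1) := by nlinarith
    nlinarith [mul_nonneg this hc2.le]
  have hl1 : lam < 1 := by
    by_contra hcon
    push_neg at hcon
    have : 0 ≤ lam*(lam-1) := mul_nonneg hl0.le (by linarith)
    nlinarith [mul_nonneg this hc2.le]
  exact ⟨lam, hl0, hl1, hfoot, hdot⟩

/-- bic-II with Chapple's relation: the incenter is a fixed point. -/
theorem stmt_5 (R r d : ℝ) (hd : 0 ≤ d) (hr : 0 < r) (hin : d + r < R)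
    (hchapple : d ^ 2 = R * (R - 2 * r))
    (P₁ P₂ P₃ : E2)
    (h1 : dist P₁ (pt 0 0) = R) (h2 : dist P₂ (pt 0 0) = R) (h3 : dist P₃ (pt 0 0) = R)
    (hind : AffineIndependent ℝ ![P₁, P₂, P₃])
    (t12 : IsTangentLine P₁ P₂ (pt d 0) r) (t13 : IsTangentLine P₁ P₃ (pt d 0) r) :
    incenter2 P₁ P₂ P₃ = pt (2 * d * R * r / (R ^ 2 - d ^ 2)) 0 := by
  have hRpos : (0:ℝ) < R := by linarith
  obtain ⟨x1, y1, rfl⟩ : ∃ x y, P₁ = pt x y := ⟨_, _, by ext i; fin_cases i <;> rfl⟩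
  obtain ⟨x2, y2, rfl⟩ : ∃ x y, P₂ = pt x y := ⟨_, _, by ext i; fin_cases i <;> rfl⟩
  obtain ⟨x3, y3, rfl⟩ : ∃ x y, P₃ = pt x y := ⟨_, _, by ext i; fin_cases i <;> rfl⟩
  have hsq : ∀ a b : ℝ, dist (pt a b) (pt 0 0) = R → a^2+b^2 = R^2 := by
    intro a b h
    have := dist_pt_sq a b 0 0
    rw [h] at this
    linear_combination -this
  have hx1 := hsq _ _ h1
  have hx2 := hsq _ _ h2
  have hx3 := hsq _ _ h3
  -- distinctness
  have hPne12 : pt x1 y1 ≠ pt x2 y2 := by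
    have := hind.injective.ne (show (0:Fin 3) ≠ 1 by decide)
    simpa using this
  have hPne13 : pt x1 y1 ≠ pt x3 y3 := by
    have := hind.injective.ne (show (0:Fin 3) ≠ 2 by decide)
    simpa using this
  have hne12 : ¬(x1 = x2 ∧ y1 = y2) := by
    rintro ⟨hx, hy⟩; exact hPne12 (by rw [hx, hy])
  have hne13 : ¬(x1 = x3 ∧ y1 = y3) := by
    rintro ⟨hx, hy⟩; exact hPne13 (by rw [hx, hy])
  obtain ⟨l2, hl20, hl21, hfoot2, hdot2⟩ := chord R r d x1 y1 x2 y2 hr hd hin hx1 hx2 hne12 t12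
  obtain ⟨l3, hl30, hl31, hfoot3, hdot3⟩ := chord R r d x1 y1 x3 y3 hr hd hin hx1 hx3 hne13 t13
  -- tangent lengths
  have hxR : ∀ a b : ℝ, a^2+b^2 = R^2 → r^2 < (a-d)^2+b^2 := by
    intro a b h
    have haR : a ≤ R := by
      rcases le_or_gt a 0 with h0 | h0
      · linarith
      · exact le_of_pow_le_pow_left₀ two_ne_zero hRpos.le (by linarith [sq_nonneg b])
    have key : (a-d)^2+b^2 - r^2 = (R-d-r)*(R-d+r) + 2*(d*(R-a)) := by
      linear_combination h
    have h1 : 0 < (R-d-r)*(R-d+r) := mul_pos (by linarith) (by linarith)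
    have h2 : 0 ≤ d*(R-a) := mul_nonneg hd (by linarith)
    linarith
  obtain ⟨t1, ht1def⟩ : ∃ t:ℝ, t = Real.sqrt ((x1-d)^2+y1^2-r^2) := ⟨_, rfl⟩
  obtain ⟨t2, ht2def⟩ : ∃ t:ℝ, t = Real.sqrt ((x2-d)^2+y2^2-r^2) := ⟨_, rfl⟩
  obtain ⟨t3, ht3def⟩ : ∃ t:ℝ, t = Real.sqrt ((x3-d)^2+y3^2-r^2) := ⟨_, rfl⟩
  have ht1sq : t1^2 = (x1-d)^2+y1^2-r^2 := by
    rw [ht1def]; exact Real.sq_sqrt (by linarith [hxR _ _ hx1])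
  have ht2sq : t2^2 = (x2-d)^2+y2^2-r^2 := by
    rw [ht2def]; exact Real.sq_sqrt (by linarith [hxR _ _ hx2])
  have ht3sq : t3^2 = (x3-d)^2+y3^2-r^2 := by
    rw [ht3def]; exact Real.sq_sqrt (by linarith [hxR _ _ hx3])
  have ht1pos : 0 < t1 := by rw [ht1def]; exact Real.sqrt_pos.mpr (by linarith [hxR _ _ hx1])
  have ht2pos : 0 < t2 := by rw [ht2def]; exact Real.sqrt_pos.mpr (by linarith [hxR _ _ hx2])
  have ht3pos : 0 < t3 := by rw [ht3def]; exact Real.sqrt_pos.mpr (by linarith [hxR _ _ hx3])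
  -- side lengths
  obtain ⟨cd, hcddef⟩ : ∃ c:ℝ, c = dist (pt x1 y1) (pt x2 y2) := ⟨_, rfl⟩
  obtain ⟨bd, hbddef⟩ : ∃ c:ℝ, c = dist (pt x1 y1) (pt x3 y3) := ⟨_, rfl⟩
  obtain ⟨ad, haddef⟩ : ∃ c:ℝ, c = dist (pt x2 y2) (pt x3 y3) := ⟨_, rfl⟩
  have hcdsq : cd^2 = (x1-x2)^2+(y1-y2)^2 := by rw [hcddef]; exact dist_pt_sq _ _ _ _
  have hbdsq : bd^2 = (x1-x3)^2+(y1-y3)^2 := by rw [hbddef]; exact dist_pt_sq _ _ _ _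
  have hadsq : ad^2 = (x2-x3)^2+(y2-y3)^2 := by rw [haddef]; exact dist_pt_sq _ _ _ _
  have hcdpos : 0 < cd := by rw [hcddef]; exact dist_pos.mpr hPne12
  have hbdpos : 0 < bd := by rw [hbddef]; exact dist_pos.mpr hPne13
  have hadnn : 0 ≤ ad := by rw [haddef]; exact dist_nonneg
  -- t = lam * chord
  have ht1c : t1 = l2 * cd := by
    have hsq2 : t1^2 = (l2*cd)^2 := by
      linear_combination ht1sq + hfoot2 + 2*l2*hdot2 - l2^2*hcdsq
    have hfac : (t1 - l2*cd)*(t1 + l2*cd) = 0 := by linear_combination hsq2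
    rcases mul_eq_zero.mp hfac with h | h
    · linarith
    · linarith [mul_pos hl20 hcdpos]
  have ht2c : t2 = (1-l2) * cd := by
    have hsq2 : t2^2 = ((1-l2)*cd)^2 := by
      linear_combination ht2sq + hfoot2 - (2-2*l2)*hdot2 - (1-l2)^2*hcdsq
    have hfac : (t2 - (1-l2)*cd)*(t2 + (1-l2)*cd) = 0 := by linear_combination hsq2
    rcases mul_eq_zero.mp hfac with h | h
    · linarith
    · linarith [mul_pos (by linarith : (0:ℝ) < 1 - l2) hcdpos]
  have ht1b : t1 = l3 * bd := by
    have hsq2 : t1^2 = (l3*bd)^2 := by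
      linear_combination ht1sq + hfoot3 + 2*l3*hdot3 - l3^2*hbdsq
    have hfac : (t1 - l3*bd)*(t1 + l3*bd) = 0 := by linear_combination hsq2
    rcases mul_eq_zero.mp hfac with h | h
    · linarith
    · linarith [mul_pos hl30 hbdpos]
  have ht3b : t3 = (1-l3) * bd := by
    have hsq2 : t3^2 = ((1-l3)*bd)^2 := by
      linear_combination ht3sq + hfoot3 - (2-2*l3)*hdot3 - (1-l3)^2*hbdsq
    have hfac : (t3 - (1-l3)*bd)*(t3 + (1-l3)*bd) = 0 := by linear_combination hsq2
    rcases mul_eq_zero.mp hfac with h | h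
    · linarith
    · linarith [mul_pos (by linarith : (0:ℝ) < 1 - l3) hbdpos]
  have hcd : cd = t1 + t2 := by linear_combination -ht1c - ht2c
  have hbd : bd = t1 + t3 := by linear_combination -ht1b - ht3b
  -- dot products with I
  have hdot12I : (x1-d)*(x2-d) + y1*y2 = r^2 - t1*t2 := by
    linear_combination (-1)*ht1sq - hdot2 + (t1+cd)*ht1c + t1*ht2c + l2*hcdsq
  have hdot13I : (x1-d)*(x3-d) + y1*y3 = r^2 - t1*t3 := by
    linear_combination (-1)*ht1sq - hdot3 + (t1+bd)*ht1b + t1*ht3b + l3*hbdsq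
  -- squared cross products
  have hcr12sq : ((x1-d)*y2 - y1*(x2-d))^2 = r^2*(t1+t2)^2 := by
    linear_combination (-((x2-d)^2+y2^2))*ht1sq - (r^2+t1^2)*ht2sq
      - ((x1-d)*(x2-d)+y1*y2 + r^2 - t1*t2)*hdot12I
  have hcr13sq : ((x1-d)*y3 - y1*(x3-d))^2 = r^2*(t1+t3)^2 := by
    linear_combination (-((x3-d)^2+y3^2))*ht1sq - (r^2+t1^2)*ht3sq
      - ((x1-d)*(x3-d)+y1*y3 + r^2 - t1*t3)*hdot13I
  have hUpos : 0 < (x1-d)^2+y1^2 := by linarith [hxR _ _ hx1, pow_pos hr 2]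
  -- sign lemma : cr12 * cr13 = -(r^2*(t1+t2)*(t1+t3))
  have hcr' : ((x1-d)*y2 - y1*(x2-d)) * ((x1-d)*y3 - y1*(x3-d))
      = -(r^2*(t1+t2)*(t1+t3)) := by
    have hG2dot : (x1 + l2*(x2-x1) - d)*(x1-d) + (y1 + l2*(y2-y1))*y1 = r^2 := by
      linear_combination (-1)*ht1sq - l2*hdot2 + (t1+l2*cd)*ht1c + l2^2*hcdsq
    have hG3dot : (x1 + l3*(x3-x1) - d)*(x1-d) + (y1 + l3*(y3-y1))*y1 = r^2 := by
      linear_combination (-1)*ht1sq - l3*hdot3 + (t1+l3*bd)*ht1b + l3^2*hbdsq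
    have hGsq2 : ((x1-d)*(y1 + l2*(y2-y1)) - y1*(x1 + l2*(x2-x1) - d))^2 = r^2*t1^2 := by
      linear_combination (-((x1 + l2*(x2-x1) - d)^2 + (y1 + l2*(y2-y1))^2))*ht1sq
        + (r^2+t1^2)*hfoot2
        - ((x1 + l2*(x2-x1) - d)*(x1-d) + (y1 + l2*(y2-y1))*y1 + r^2)*hG2dot
    have hGsq3 : ((x1-d)*(y1 + l3*(y3-y1)) - y1*(x1 + l3*(x3-x1) - d))^2 = r^2*t1^2 := by
      linear_combination (-((x1 + l3*(x3-x1) - d)^2 + (y1 + l3*(y3-y1))^2))*ht1sq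
        + (r^2+t1^2)*hfoot3
        - ((x1 + l3*(x3-x1) - d)*(x1-d) + (y1 + l3*(y3-y1))*y1 + r^2)*hG3dot
    by_cases hFF : x1 + l2*(x2-x1) = x1 + l3*(x3-x1) ∧ y1 + l2*(y2-y1) = y1 + l3*(y3-y1)
    · exfalso
      obtain ⟨hfx, hfy⟩ := hFF
      have hcol : Collinear ℝ (Set.range ![pt x1 y1, pt x2 y2, pt x3 y3]) := by
        rw [collinear_iff_of_mem (Set.mem_range.mpr ⟨0, rfl⟩)]
        refine ⟨pt x2 y2 - pt x1 y1, ?_⟩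
        intro p hp
        obtain ⟨i, rfl⟩ := hp
        fin_cases i
        · exact ⟨0, by ext j; fin_cases j <;> simp [pt, vadd_eq_add]⟩
        · exact ⟨1, by ext j; fin_cases j <;> simp [pt, vadd_eq_add]⟩
        · refine ⟨l2/l3, ?_⟩
          ext j; fin_cases j
          · show x3 = l2/l3 * (x2 - x1) + x1
            field_simp
            linear_combination -hfx
          · show y3 = l2/l3 * (y2 - y1) + y1
            field_simp
            linear_combination -hfy
      exact (affineIndependent_iff_not_collinear.mp hind) hcol
    · have hGne : (x1-d)*(y1 + l2*(y2-y1)) - y1*(x1 + l2*(x2-x1) - d)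
          ≠ (x1-d)*(y1 + l3*(y3-y1)) - y1*(x1 + l3*(x3-x1) - d) := by
        intro heq
        apply hFF
        constructor
        · have hzx : ((x1-d)^2 + y1^2) * ((x1 + l2*(x2-x1)) - (x1 + l3*(x3-x1))) = 0 := by
            linear_combination (x1-d)*hG2dot - (x1-d)*hG3dot - y1*heq
          have := (mul_eq_zero.mp hzx).resolve_left (ne_of_gt hUpos)
          linarith
        · have hzy : ((x1-d)^2 + y1^2) * ((y1 + l2*(y2-y1)) - (y1 + l3*(y3-y1))) = 0 := by
            linear_combination y1*hG2dot - y1*hG3dot + (x1-d)*heq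
          have := (mul_eq_zero.mp hzy).resolve_left (ne_of_gt hUpos)
          linarith
      have hGopp : (x1-d)*(y1 + l3*(y3-y1)) - y1*(x1 + l3*(x3-x1) - d)
          = -((x1-d)*(y1 + l2*(y2-y1)) - y1*(x1 + l2*(x2-x1) - d)) := by
        have hfac : (((x1-d)*(y1 + l2*(y2-y1)) - y1*(x1 + l2*(x2-x1) - d))
            - ((x1-d)*(y1 + l3*(y3-y1)) - y1*(x1 + l3*(x3-x1) - d)))
            * (((x1-d)*(y1 + l2*(y2-y1)) - y1*(x1 + l2*(x2-x1) - d))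
            + ((x1-d)*(y1 + l3*(y3-y1)) - y1*(x1 + l3*(x3-x1) - d))) = 0 := by
          linear_combination hGsq2 - hGsq3
        rcases mul_eq_zero.mp hfac with h | h
        · exact absurd (by linarith) hGne
        · linarith
      have h1' : ((x1-d)*(y1 + l2*(y2-y1)) - y1*(x1 + l2*(x2-x1) - d))
          * ((x1-d)*(y1 + l3*(y3-y1)) - y1*(x1 + l3*(x3-x1) - d)) = -(r^2*t1^2) := by
        linear_combination ((x1-d)*(y1 + l2*(y2-y1)) - y1*(x1 + l2*(x2-x1) - d))*hGopp - hGsq2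
      -- crossG2 = l2 * cr12, crossG3 = l3 * cr13 (ring identities)
      have h2' : (l2*((x1-d)*y2 - y1*(x2-d))) * (l3*((x1-d)*y3 - y1*(x3-d))) = -(r^2*t1^2) := by
        linear_combination h1'
      have hA : t1^2 * (((x1-d)*y2 - y1*(x2-d)) * ((x1-d)*y3 - y1*(x3-d)))
          = t1^2 * (-(r^2*cd*bd)) := by
        linear_combination cd*bd*h2'
          + ((x1-d)*y2 - y1*(x2-d)) * ((x1-d)*y3 - y1*(x3-d)) * (t1*ht1b + l3*bd*ht1c)
      have := mul_left_cancel₀ (pow_ne_zero 2 (ne_of_gt ht1pos)) hA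
      rw [this, hcd, hbd]
  -- key relations
  have hdu1 : 2*(d*x1) = R^2 + d^2 - r^2 - t1^2 := by linear_combination hx1 + ht1sq
  have hdu2 : 2*(d*x2) = R^2 + d^2 - r^2 - t2^2 := by linear_combination hx2 + ht2sq
  have hdu3 : 2*(d*x3) = R^2 + d^2 - r^2 - t3^2 := by linear_combination hx3 + ht3sq
  have key12 : ((x1-d)*y2 - y1*(x2-d)) * (-(d*y1))
      = (t1+t2)*(2*R*r*t1 - (r^2+t1^2)*t2)/2 := by
    linear_combination (-(d*x2 - d^2))*ht1sq + ((r^2+t1^2)/2)*hdu2 - ((r^2+t1^2)/2)*hchapple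
      - (d*x1 - d^2)*hdot12I - ((r^2-t1*t2)/2)*hdu1 + ((r^2-t1*t2)/2)*hchapple
  have key13 : ((x1-d)*y3 - y1*(x3-d)) * (-(d*y1))
      = (t1+t3)*(2*R*r*t1 - (r^2+t1^2)*t3)/2 := by
    linear_combination (-(d*x3 - d^2))*ht1sq + ((r^2+t1^2)/2)*hdu3 - ((r^2+t1^2)/2)*hchapple
      - (d*x1 - d^2)*hdot13I - ((r^2-t1*t3)/2)*hdu1 + ((r^2-t1*t3)/2)*hchapple
  have hG2sq' : (2*R*r*t1 - (r^2+t1^2)*t2)^2 = 4*r^2*(d*y1)^2 := by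
    have h4 : (t1+t2)^2 * ((2*R*r*t1 - (r^2+t1^2)*t2)^2 - 4*r^2*(d*y1)^2) = 0 := by
      linear_combination (-4)*(((x1-d)*y2 - y1*(x2-d))*(-(d*y1))
        + (t1+t2)*(2*R*r*t1 - (r^2+t1^2)*t2)/2)*key12 + 4*(d*y1)^2*hcr12sq
    have := (mul_eq_zero.mp h4).resolve_left (by positivity)
    linarith
  have hG3sq' : (2*R*r*t1 - (r^2+t1^2)*t3)^2 = 4*r^2*(d*y1)^2 := by
    have h4 : (t1+t3)^2 * ((2*R*r*t1 - (r^2+t1^2)*t3)^2 - 4*r^2*(d*y1)^2) = 0 := by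
      linear_combination (-4)*(((x1-d)*y3 - y1*(x3-d))*(-(d*y1))
        + (t1+t3)*(2*R*r*t1 - (r^2+t1^2)*t3)/2)*key13 + 4*(d*y1)^2*hcr13sq
    have := (mul_eq_zero.mp h4).resolve_left (by positivity)
    linarith
  have hGprod' : (2*R*r*t1 - (r^2+t1^2)*t2)*(2*R*r*t1 - (r^2+t1^2)*t3)
      = -(4*r^2*(d*y1)^2) := by
    have hcr'' : ((x1-d)*y2 - y1*(x2-d)) * ((x1-d)*y3 - y1*(x3-d))
        = -(r^2*(t1+t2)*(t1+t3)) := hcr'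
    have h4 : (t1+t2)*(t1+t3) * ((2*R*r*t1 - (r^2+t1^2)*t2)*(2*R*r*t1 - (r^2+t1^2)*t3)
        + 4*r^2*(d*y1)^2) = 0 := by
      linear_combination (-4)*(((x1-d)*y3 - y1*(x3-d))*(-(d*y1)))*key12
        + (-4)*((t1+t2)*(2*R*r*t1 - (r^2+t1^2)*t2)/2)*key13 + 4*(d*y1)^2*hcr''
    have := (mul_eq_zero.mp h4).resolve_left (by positivity)
    linarith
  have hGsum : (2*R*r*t1 - (r^2+t1^2)*t2) + (2*R*r*t1 - (r^2+t1^2)*t3) = 0 := by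
    have h0 : ((2*R*r*t1 - (r^2+t1^2)*t2) + (2*R*r*t1 - (r^2+t1^2)*t3))^2 = 0 := by
      linear_combination hG2sq' + hG3sq' + 2*hGprod'
    exact pow_eq_zero_iff two_ne_zero |>.mp h0
  have hsum : (r^2+t1^2)*(t2+t3) = 4*R*r*t1 := by linear_combination -hGsum
  have hprod : (r^2+t1^2)^2*(t2*t3) = 4*R^2*r^2*t1^2 - 4*r^2*(d*y1)^2 := by
    linear_combination hGprod' + 2*R*r*t1*hsum
  have hq : 4*(d*y1)^2 = 4*d^2*(r^2+t1^2) - (2*R*r - r^2 - t1^2)^2 := by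
    linear_combination (-4*d^2)*ht1sq - (2*d*x1 - 2*d^2 + 2*R*r - r^2 - t1^2)*hdu1
      + (2*d*x1 - 2*d^2 + 2*R*r - r^2 - t1^2)*hchapple
  have hK : r^2*(t1+t2+t3) = t1*t2*t3 := by
    have hK4 : (r^2+t1^2)^2 * (r^2*(t1+t2+t3) - t1*t2*t3) = 0 := by
      linear_combination r^2*(r^2+t1^2)*hsum - t1*hprod + r^2*t1*hq
        + 4*r^2*t1*(r^2+t1^2)*hchapple
    have := (mul_eq_zero.mp hK4).resolve_left (by positivity)
    linarith
  have hdot23I : (x2-d)*(x3-d) + y2*y3 = r^2 - t2*t3 := by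
    have h23 : (r^2+t1^2)*((x2-d)*(x3-d) + y2*y3) = (r^2+t1^2)*(r^2 - t2*t3) := by
      have hcr'' := hcr'
      linear_combination ((x2-d)*(x3-d)+y2*y3)*ht1sq
        + ((x1-d)*(x3-d)+y1*y3)*hdot12I + (r^2-t1*t2)*hdot13I + hcr'' - 2*t1*hK
    exact mul_left_cancel₀ (by positivity) h23
  have had : ad = t2 + t3 := by
    have hsq2 : ad^2 = (t2+t3)^2 := by
      linear_combination hadsq - ht2sq - ht3sq - 2*hdot23I
    have hfac : (ad - (t2+t3))*(ad + (t2+t3)) = 0 := by linear_combination hsq2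
    rcases mul_eq_zero.mp hfac with h | h
    · linarith
    · linarith
  -- final identities
  have hSsum : ((t2+t3)*(x1-d) + (t1+t3)*(x2-d) + (t1+t2)*(x3-d))^2
      + ((t2+t3)*y1 + (t1+t3)*y2 + (t1+t2)*y3)^2 = 0 := by
    linear_combination (-(t2+t3)^2)*ht1sq - (t1+t3)^2*ht2sq - (t1+t2)^2*ht3sq
      + 2*(t2+t3)*(t1+t3)*hdot12I + 2*(t2+t3)*(t1+t2)*hdot13I + 2*(t1+t3)*(t1+t2)*hdot23I
      + 4*(t1+t2+t3)*hK
  have hSx : (t2+t3)*(x1-d) + (t1+t3)*(x2-d) + (t1+t2)*(x3-d) = 0 := by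
    have h0 : ((t2+t3)*(x1-d) + (t1+t3)*(x2-d) + (t1+t2)*(x3-d))^2 = 0 :=
      le_antisymm (by linarith [sq_nonneg ((t2+t3)*y1 + (t1+t3)*y2 + (t1+t2)*y3)])
        (sq_nonneg _)
    exact pow_eq_zero_iff two_ne_zero |>.mp h0
  have hSy : (t2+t3)*y1 + (t1+t3)*y2 + (t1+t2)*y3 = 0 := by
    have h0 : ((t2+t3)*y1 + (t1+t3)*y2 + (t1+t2)*y3)^2 = 0 :=
      le_antisymm (by linarith [sq_nonneg ((t2+t3)*(x1-d) + (t1+t3)*(x2-d) + (t1+t2)*(x3-d))])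
        (sq_nonneg _)
    exact pow_eq_zero_iff two_ne_zero |>.mp h0
  -- conclusion
  have hgx : 2 * d * R * r / (R ^ 2 - d ^ 2) = d := by
    have hRr : R^2 - d^2 = 2*R*r := by linear_combination -hchapple
    rw [hRr]
    field_simp
  have hssum_pos : (0:ℝ) < (t2+t3) + (t1+t3) + (t1+t2) := by linarith
  rw [hgx]
  show incenter2 (pt x1 y1) (pt x2 y2) (pt x3 y3) = pt d 0
  unfold incenter2
  rw [← haddef, ← hbddef, ← hcddef, had, hbd, hcd]
  ext i
  fin_cases i
  · have hval : ((t2+t3) + (t1+t3) + (t1+t2))⁻¹ * ((t2+t3)*x1 + (t1+t3)*x2 + (t1+t2)*x3) = d := by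
      field_simp
      linear_combination hSx
    rw [mul_add, mul_add] at hval
    simpa [pt, PiLp.smul_apply, PiLp.add_apply, smul_eq_mul] using hval
  · have hval : ((t2+t3) + (t1+t3) + (t1+t2))⁻¹ * ((t2+t3)*y1 + (t1+t3)*y2 + (t1+t2)*y3) = 0 := by
      field_simp
      linear_combination hSy
    rw [mul_add, mul_add] at hval
    simpa [pt, PiLp.smul_apply, PiLp.add_apply, smul_eq_mul] using hval
end
end

section
/- With the caustic choice a' = a²/√(a²+b²), b' = b²/√(a²+b²) in the conf-II family (equivalently λ = a²b²/(a²+b²)), the elliptic locus of the excenters P₂', P₃' has aspect ratio a_e/b_e = b/a, the reciprocal of the outer ellipse's aspect ratio. -/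
/-- With the `N = 4` caustic (`λ = a²b²/(a²+b²)`), the excentral locus has
aspect ratio `b/a`. -/
theorem stmt_13 (a b lam c2 k ae be : ℝ) (hab : a > b) (hb : 0 < b)
    (hc2 : c2 = a ^ 2 - b ^ 2)
    (hlam : lam = a ^ 2 * b ^ 2 / (a ^ 2 + b ^ 2))
    (hk : k = ((a + b) ^ 2 * lam + a ^ 2 * b ^ 2) * ((a - b) ^ 2 * lam + a ^ 2 * b ^ 2))
    (hae : ae = a * Real.sqrt k / (a ^ 2 * b ^ 2 + c2 * lam))
    (hbe : be = b * Real.sqrt k / (a ^ 2 * b ^ 2 - c2 * lam)) :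
    ae / be = b / a := by
  have ha : 0 < a := lt_trans hb hab
  have hs : (0:ℝ) < a ^ 2 + b ^ 2 := by positivity
  have hlam' : 0 < lam := by rw [hlam]; positivity
  have hk' : 0 < k := by
    rw [hk]
    have h1 : (0:ℝ) < (a + b) ^ 2 * lam + a ^ 2 * b ^ 2 := by positivity
    have h2 : (0:ℝ) < (a - b) ^ 2 * lam + a ^ 2 * b ^ 2 := by
      have h3 : (0:ℝ) ≤ (a - b) ^ 2 * lam := by positivity
      have h4 : (0:ℝ) < a ^ 2 * b ^ 2 := by positivity
      linarith
    exact mul_pos h1 h2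
  have hsk : 0 < Real.sqrt k := Real.sqrt_pos.2 hk'
  have h1 : a ^ 2 * b ^ 2 + c2 * lam = 2 * a ^ 4 * b ^ 2 / (a ^ 2 + b ^ 2) := by
    rw [hc2, hlam]; field_simp; ring
  have h2 : a ^ 2 * b ^ 2 - c2 * lam = 2 * a ^ 2 * b ^ 4 / (a ^ 2 + b ^ 2) := by
    rw [hc2, hlam]; field_simp; ring
  rw [hae, hbe, h1, h2]
  rw [div_div_div_eq]
  field_simp
end

section
/- With the caustic choice λ = (ab/(a+b))² in the conf-II family, the locus of the excenters P₂', P₃' is a circle, i.e., a_e = b_e. -/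
/-- With the `N = 6` caustic (`λ = (ab/(a+b))²`), the excentral locus is a
circle: `a_e = b_e`. -/
theorem stmt_14 (a b lam c2 k ae be : ℝ) (hab : a > b) (hb : 0 < b)
    (hc2 : c2 = a ^ 2 - b ^ 2)
    (hlam : lam = (a * b / (a + b)) ^ 2)
    (hk : k = ((a + b) ^ 2 * lam + a ^ 2 * b ^ 2) * ((a - b) ^ 2 * lam + a ^ 2 * b ^ 2))
    (hae : ae = a * Real.sqrt k / (a ^ 2 * b ^ 2 + c2 * lam))
    (hbe : be = b * Real.sqrt k / (a ^ 2 * b ^ 2 - c2 * lam)) :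
    ae = be := by
  have ha : 0 < a := hb.trans hab
  have hs : a + b ≠ 0 := by positivity
  have h1 : a ^ 2 * b ^ 2 + c2 * lam = 2 * a ^ 3 * b ^ 2 / (a + b) := by
    rw [hc2, hlam]; field_simp; ring
  have h2 : a ^ 2 * b ^ 2 - c2 * lam = 2 * a ^ 2 * b ^ 3 / (a + b) := by
    rw [hc2, hlam]; field_simp; ring
  rw [hae, hbe, h1, h2]
  field_simp
end
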